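/- For every natural number n and every complex number z, ∫_ℝ H_n(t) · e^{2tz − z² − t²} dt = 2^n · √π · z^n. Equivalently, the Bargmann transform 𝔅f(z) = (2^{1/4}/π^{3/2}) ∫_ℝ f(t/√(2π)) e^{2tz − z² − t²/2} dt of the scaled Hermite function h_n(x) = H_n(√(2π)·x) e^{−πx²} equals (2^{n+1/4}/π) z^n. -/

import Mathlib

/-!
Differentiating the Rodrigues formula shows that `H_n` is the polynomial with `H_0 = 1` and
`H_{n+1} = 2X H_n - H_n'`. With `E(t) = e^{2tz - z² - t²}` we have `E' = (2z - 2t) E`, so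
integrating `(H_n E)'` over `ℝ` gives `∫ H_{n+1} E = 2z ∫ H_n E`, while `∫ E = √π` is the
Gaussian integral. The Bargmann form follows from `h_n(t/√(2π)) = H_n(t) e^{-t²/2}`.
-/

open MeasureTheory Real
open scoped Real

/-- The `n`-th physicists' Hermite polynomial, via the Rodrigues formula
`H_n(x) = (-1)^n e^{x²} (d^n/dx^n) e^{-x²}`. -/
noncomputable def physHermite (n : ℕ) (x : ℝ) : ℝ :=
  (-1) ^ n * Real.exp (x ^ 2) * iteratedDeriv n (fun t : ℝ => Real.exp (-t ^ 2)) x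

/-- The scaled Hermite function `h_n(x) = H_n(√(2π)x) e^{-πx²}`, viewed as a
complex-valued function. -/
noncomputable def scaledHermite (n : ℕ) (x : ℝ) : ℂ :=
  (physHermite n (Real.sqrt (2 * π) * x) : ℂ) * Complex.exp (-(π * x ^ 2 : ℝ))

open Polynomial
open scoped Nat

noncomputable def physHermitePoly : ℕ → ℝ[X]
  | 0 => 1
  | n + 1 => 2 * X * physHermitePoly n - derivative (physHermitePoly n)

lemma hasDerivAt_exp_neg_sq (t : ℝ) :
    HasDerivAt (fun s : ℝ => Real.exp (-s ^ 2)) (-(2 * t) * Real.exp (-t ^ 2)) t := by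
  simpa [mul_comm] using ((hasDerivAt_pow 2 t).neg).exp

lemma iteratedDeriv_exp_neg_sq (n : ℕ) :
    iteratedDeriv n (fun s : ℝ => Real.exp (-s ^ 2))
      = fun t => (-1) ^ n * (physHermitePoly n).eval t * Real.exp (-t ^ 2) := by
  induction n with
  | zero => ext t; simp [physHermitePoly]
  | succ n ih =>
    ext t
    rw [iteratedDeriv_succ, ih,
      ((((physHermitePoly n).hasDerivAt t).const_mul _).fun_mul (hasDerivAt_exp_neg_sq t)).deriv]
    simp only [physHermitePoly, eval_sub, eval_mul, eval_X, eval_ofNat]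
    ring

lemma physHermite_eq_eval (n : ℕ) (t : ℝ) : physHermite n t = (physHermitePoly n).eval t := by
  have hsign : ((-1 : ℝ) ^ n) ^ 2 = 1 := by rw [← pow_mul, mul_comm, pow_mul]; norm_num
  rw [physHermite, iteratedDeriv_exp_neg_sq]
  calc (-1) ^ n * Real.exp (t ^ 2) * ((-1) ^ n * (physHermitePoly n).eval t * Real.exp (-t ^ 2))
      = ((-1) ^ n) ^ 2 * (Real.exp (t ^ 2) * Real.exp (-t ^ 2)) * (physHermitePoly n).eval t := by
        ring
    _ = (physHermitePoly n).eval t := by simp [hsign, ← Real.exp_add]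

lemma integrable_pow_mul_cexp_quadratic (k : ℕ) {b : ℂ} (hb : b.re < 0) (c d : ℂ) :
    Integrable fun t : ℝ => (t : ℂ) ^ k * Complex.exp (b * t ^ 2 + c * t + d) := by
  -- `|t| ^ k ≤ k! e^{|t|} ≤ k! (e^t + e^{-t})` absorbs the power into the linear term.
  have hdom := ((integrable_cexp_quadratic' hb (c + 1) d).norm.add
    (integrable_cexp_quadratic' hb (c - 1) d).norm).const_mul (k ! : ℝ)
  refine hdom.mono' (by fun_prop) (Filter.Eventually.of_forall fun t => ?_)
  have hpow : |t| ^ k ≤ k ! * (Real.exp t + Real.exp (-t)) := by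
    have := Real.pow_div_factorial_le_exp |t| (abs_nonneg t) k
    rw [div_le_iff₀ (by positivity)] at this
    nlinarith [Real.exp_abs_le t, (by positivity : (0 : ℝ) < k !)]
  simp only [norm_mul, norm_pow, Complex.norm_real, Real.norm_eq_abs, Complex.norm_exp,
    Pi.add_apply]
  rw [show b * (t : ℂ) ^ 2 + (c + 1) * t + d = b * t ^ 2 + c * t + d + (t : ℝ) by ring,
    show b * (t : ℂ) ^ 2 + (c - 1) * t + d = b * t ^ 2 + c * t + d + (-t : ℝ) by
      push_cast; ring]
  generalize b * (t : ℂ) ^ 2 + c * t + d = q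
  rw [Complex.add_re, Complex.add_re, Complex.ofReal_re, Complex.ofReal_re, Real.exp_add,
    Real.exp_add, mul_comm]
  calc Real.exp q.re * |t| ^ k ≤ Real.exp q.re * (k ! * (Real.exp t + Real.exp (-t))) := by
        gcongr
    _ = _ := by ring

lemma integrable_eval_mul_cexp_quadratic (p : ℝ[X]) {b : ℂ} (hb : b.re < 0) (c d : ℂ) :
    Integrable fun t : ℝ => ((p.eval t : ℝ) : ℂ) * Complex.exp (b * t ^ 2 + c * t + d) := by
  simp_rw [eval_eq_sum_range, Complex.ofReal_sum, Finset.sum_mul]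
  refine integrable_finsetSum _ fun i _ =>
    ((integrable_pow_mul_cexp_quadratic i hb c d).const_mul ((p.coeff i : ℝ) : ℂ)).congr
      (Filter.Eventually.of_forall fun t => ?_)
  push_cast
  ring

lemma integrable_eval_mul_cexp (p : ℝ[X]) (z : ℂ) :
    Integrable fun t : ℝ =>
      ((p.eval t : ℝ) : ℂ) * Complex.exp (2 * t * z - z ^ 2 - (t : ℂ) ^ 2) := by
  convert integrable_eval_mul_cexp_quadratic p (b := -1) (by simp) (2 * z) (-z ^ 2) using 4
  ring

lemma hasDerivAt_cexp_two_mul_sub_sq (z : ℂ) (t : ℝ) :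
    HasDerivAt (fun s : ℝ => Complex.exp (2 * s * z - z ^ 2 - (s : ℂ) ^ 2))
      ((2 * z - 2 * t) * Complex.exp (2 * t * z - z ^ 2 - (t : ℂ) ^ 2)) t := by
  have h := (((((hasDerivAt_id' (t : ℂ)).const_mul 2).mul_const z).sub_const (z ^ 2)).fun_sub
    (hasDerivAt_pow 2 (t : ℂ))).cexp.comp_ofReal
  convert h using 1
  push_cast
  ring

lemma integral_eval_two_X_mul_sub_derivative_mul_cexp (p : ℝ[X]) (z : ℂ) :
    ∫ t : ℝ, (((2 * X * p - derivative p).eval t : ℝ) : ℂ)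
        * Complex.exp (2 * t * z - z ^ 2 - (t : ℂ) ^ 2)
      = 2 * z *
        ∫ t : ℝ, ((p.eval t : ℝ) : ℂ) * Complex.exp (2 * t * z - z ^ 2 - (t : ℂ) ^ 2) := by
  set E := fun t : ℝ => Complex.exp (2 * t * z - z ^ 2 - (t : ℂ) ^ 2)
  have hint (q : ℝ[X]) : Integrable fun t => ((q.eval t : ℝ) : ℂ) * E t :=
    integrable_eval_mul_cexp q z
  have hderiv (t : ℝ) : HasDerivAt (fun s => ((p.eval s : ℝ) : ℂ) * E s)
      (((p.derivative.eval t : ℝ) : ℂ) * E t + p.eval t * ((2 * z - 2 * t) * E t)) t :=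
    (p.hasDerivAt t).ofReal_comp.mul (hasDerivAt_cexp_two_mul_sub_sq z t)
  have hint' := ((hint p.derivative).add ((hint p).const_mul (2 * z))).sub
    ((hint (X * p)).const_mul 2)
  -- `(p E)' = (p' + (2z - 2t) p) E` integrates to zero over `ℝ`.
  have htotal := integral_eq_zero_of_hasDerivAt_of_integrable hderiv
    (hint'.congr (Filter.Eventually.of_forall fun t => by
      simp only [eval_mul, eval_X, Complex.ofReal_mul, Pi.sub_apply, Pi.add_apply]; ring)) (hint p)
  rw [← sub_eq_zero, ← integral_const_mul, ← integral_sub (hint _) ((hint p).const_mul _),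
    ← neg_eq_zero, ← integral_neg, ← htotal]
  congr 1 with t
  simp only [eval_sub, eval_mul, eval_ofNat, eval_X, Complex.ofReal_sub, Complex.ofReal_mul,
    Complex.ofReal_ofNat, neg_sub]
  ring

lemma integral_cexp_two_mul_sub_sq (z : ℂ) :
    ∫ t : ℝ, Complex.exp (2 * t * z - z ^ 2 - (t : ℂ) ^ 2) = (Real.sqrt π : ℂ) := by
  have h := integral_cexp_quadratic (b := -1) (by simp) (2 * z) (-z ^ 2)
  simp only [show -z ^ 2 - (2 * z) ^ 2 / (4 * -1) = 0 by ring, Complex.exp_zero, mul_one, neg_neg,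
    div_one] at h
  rw [Real.sqrt_eq_rpow, Complex.ofReal_cpow Real.pi_pos.le]
  push_cast
  rw [← h]
  congr 1 with t
  ring_nf

theorem integral_physHermitePoly_mul_cexp (n : ℕ) (z : ℂ) :
    ∫ t : ℝ, (((physHermitePoly n).eval t : ℝ) : ℂ)
        * Complex.exp (2 * t * z - z ^ 2 - (t : ℂ) ^ 2)
      = 2 ^ n * (Real.sqrt π : ℂ) * z ^ n := by
  induction n with
  | zero => simp [physHermitePoly, integral_cexp_two_mul_sub_sq]
  | succ n ih =>
    rw [physHermitePoly, integral_eval_two_X_mul_sub_derivative_mul_cexp, ih]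
    ring

lemma scaledHermite_div_sqrt (n : ℕ) (t : ℝ) :
    scaledHermite n (t / Real.sqrt (2 * π))
      = (physHermite n t : ℂ) * Complex.exp (-((t : ℂ) ^ 2 / 2)) := by
  have h2π : 0 < 2 * π := by positivity
  have hsqrt : Real.sqrt (2 * π) ≠ 0 := (Real.sqrt_pos.2 h2π).ne'
  rw [scaledHermite, mul_div_cancel₀ t hsqrt, div_pow, Real.sq_sqrt h2π.le,
    show π * (t ^ 2 / (2 * π)) = t ^ 2 / 2 by field_simp]
  push_cast
  rfl

lemma bargmann_constant (n : ℕ) :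
    (2 : ℝ) ^ ((1 : ℝ) / 4) / π ^ ((3 : ℝ) / 2) * (2 ^ n * Real.sqrt π)
      = (2 : ℝ) ^ ((n : ℝ) + 1 / 4) / π := by
  rw [Real.rpow_add two_pos, Real.rpow_natCast, show (3 : ℝ) / 2 = 1 + 1 / 2 by norm_num,
    Real.rpow_add Real.pi_pos, Real.rpow_one, ← Real.sqrt_eq_rpow]
  have := (Real.sqrt_pos.2 Real.pi_pos).ne'
  field_simp

/-- `∫ H_n(t) e^{2tz - z² - t²} dt = 2^n √π zⁿ`; equivalently, the Bargmann transform
`𝔅f(z) = (2^{1/4}/π^{3/2}) ∫ f(t/√(2π)) e^{2tz - z² - t²/2} dt` of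
`h_n(x) = H_n(√(2π)x) e^{-πx²}` equals `(2^{n+1/4}/π) zⁿ`. -/
theorem bargmann_of_hermite (n : ℕ) (z : ℂ) :
    (∫ t : ℝ, (physHermite n t : ℂ) * Complex.exp (2 * t * z - z ^ 2 - (t : ℂ) ^ 2)
      = 2 ^ n * (Real.sqrt π : ℂ) * z ^ n) ∧
    (((2 : ℝ) ^ ((1 : ℝ) / 4) / π ^ ((3 : ℝ) / 2) : ℝ)
        * ∫ t : ℝ, scaledHermite n (t / Real.sqrt (2 * π))
            * Complex.exp (2 * t * z - z ^ 2 - (t : ℂ) ^ 2 / 2)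
      = (((2 : ℝ) ^ ((n : ℝ) + 1 / 4) / π : ℝ) : ℂ) * z ^ n) := by
  have hphys :
      ∫ t : ℝ, (physHermite n t : ℂ) * Complex.exp (2 * t * z - z ^ 2 - (t : ℂ) ^ 2)
        = 2 ^ n * (Real.sqrt π : ℂ) * z ^ n := by
    simpa only [physHermite_eq_eval] using integral_physHermitePoly_mul_cexp n z
  have hscaled (t : ℝ) : scaledHermite n (t / Real.sqrt (2 * π))
        * Complex.exp (2 * t * z - z ^ 2 - (t : ℂ) ^ 2 / 2)
      = (physHermite n t : ℂ) * Complex.exp (2 * t * z - z ^ 2 - (t : ℂ) ^ 2) := by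
    rw [scaledHermite_div_sqrt, mul_assoc, ← Complex.exp_add]
    ring_nf
  refine ⟨hphys, ?_⟩
  rw [integral_congr_ae (Filter.Eventually.of_forall hscaled), hphys, ← bargmann_constant n]
  push_cast
  ring
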